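/- Let B ≥ 2, let m ≥ 1, and let (θ_p, φ_p, χ_p) ∈ [0,π]×[0,2π)×[0,2π), p = 1,…,m, be sampling points such that all columns of the Wigner-D sensing matrix A ∈ ℂ^{m×N}, N = B(2B−1)(2B+1)/3, are nonzero. Suppose there exist integers k, n with |k|, |n| ≤ B−1 and (k,n) ≠ (0,0) such that 2nχ_i + 2kφ_i ≡ 2nχ_j + 2kφ_j (mod 2π) for all i, j ∈ {1,…,m}. Then the mutual coherence of A attains its maximum: μ(A) = 1. -/

import Mathlib

open scoped Real BigOperators

/-- Associated Legendre polynomial `P_l^k(x)` for integer order `k` (possibly negative). -/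
noncomputable def assocLegendre (l : ℕ) (k : ℤ) (x : ℝ) : ℝ :=
  ((-1 : ℝ) ^ k / (2 ^ l * (Nat.factorial l : ℝ))) * (1 - x ^ 2) ^ ((k : ℝ) / 2) *
    iteratedDeriv (k + (l : ℤ)).toNat (fun y : ℝ => (y ^ 2 - 1) ^ l) x

/-- Normalization factor of spherical harmonics. -/
noncomputable def shNormFactor (l : ℕ) (k : ℤ) : ℝ :=
  Real.sqrt ((2 * (l : ℝ) + 1) / (4 * Real.pi) *
    ((Nat.factorial ((l : ℤ) - k).toNat : ℝ) / (Nat.factorial ((l : ℤ) + k).toNat : ℝ)))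

/-- Spherical harmonic `Y_l^k(θ,φ)`. -/
noncomputable def sphericalHarmonic (l : ℕ) (k : ℤ) (θ φ : ℝ) : ℂ :=
  ((shNormFactor l k * assocLegendre l k (Real.cos θ) : ℝ) : ℂ) *
    Complex.exp (Complex.I * (k : ℂ) * (φ : ℂ))

/-- Jacobi polynomial `P_α^{(ξ,λ)}(x)`. -/
noncomputable def jacobiP (a ξ lam : ℕ) (x : ℝ) : ℝ :=
  ((-1 : ℝ) ^ a / (2 ^ a * (Nat.factorial a : ℝ))) * (1 - x) ^ (-(ξ : ℤ)) *
    (1 + x) ^ (-(lam : ℤ)) *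
    iteratedDeriv a (fun y : ℝ => (1 - y) ^ ξ * (1 + y) ^ lam * (1 - y ^ 2) ^ a) x

/-- The coefficient `γ = α!(α+ξ+λ)!/((α+ξ)!(α+λ)!)`. -/
noncomputable def jacobiGamma (a ξ lam : ℕ) : ℝ :=
  ((Nat.factorial a : ℝ) * (Nat.factorial (a + ξ + lam) : ℝ)) /
    ((Nat.factorial (a + ξ) : ℝ) * (Nat.factorial (a + lam) : ℝ))

/-- Wigner d-function `d_l^{k,n}(cos θ)` (as a function of `θ`). -/
noncomputable def wignerd (l : ℕ) (k n : ℤ) (θ : ℝ) : ℝ :=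
  let ξ : ℕ := (k - n).natAbs
  let lam : ℕ := (k + n).natAbs
  let a : ℕ := l - (ξ + lam) / 2
  let ω : ℝ := if k ≤ n then 1 else (-1 : ℝ) ^ (n - k)
  ω * Real.sqrt (jacobiGamma a ξ lam) * (Real.sin (θ / 2)) ^ ξ * (Real.cos (θ / 2)) ^ lam *
    jacobiP a ξ lam (Real.cos θ)

/-- Wigner D-function `D_l^{k,n}(θ,φ,χ)`. -/
noncomputable def wignerD (l : ℕ) (k n : ℤ) (θ φ χ : ℝ) : ℂ :=
  ((Real.sqrt ((2 * (l : ℝ) + 1) / (8 * Real.pi ^ 2)) : ℝ) : ℂ) *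
    Complex.exp (-(Complex.I * (k : ℂ) * (φ : ℂ))) * ((wignerd l k n θ : ℝ) : ℂ) *
    Complex.exp (-(Complex.I * (n : ℂ) * (χ : ℂ)))

/-- Column index set for the spherical-harmonic sensing matrix: pairs `(l,k)`,
`0 ≤ l ≤ B-1`, `-l ≤ k ≤ l`.  It has `B^2` elements. -/
abbrev SHIndex (B : ℕ) := Σ l : Fin B, ↥(Set.Icc (-(l.1 : ℤ)) (l.1 : ℤ))

/-- Column index set for the Wigner-D sensing matrix: triples `(l,k,n)`,
`0 ≤ l ≤ B-1`, `-l ≤ k,n ≤ l`.  It has `B(2B-1)(2B+1)/3` elements. -/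
abbrev WDIndex (B : ℕ) :=
  Σ l : Fin B, ↥(Set.Icc (-(l.1 : ℤ)) (l.1 : ℤ)) × ↥(Set.Icc (-(l.1 : ℤ)) (l.1 : ℤ))

/-- The spherical-harmonic sensing matrix. -/
noncomputable def shMatrix {m : ℕ} (B : ℕ) (θ φ : Fin m → ℝ) :
    Matrix (Fin m) (SHIndex B) ℂ :=
  fun p i => sphericalHarmonic i.1.1 i.2.1 (θ p) (φ p)

/-- The Wigner-D sensing matrix. -/
noncomputable def wdMatrix {m : ℕ} (B : ℕ) (θ φ χ : Fin m → ℝ) :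
    Matrix (Fin m) (WDIndex B) ℂ :=
  fun p i => wignerD i.1.1 i.2.1.1 i.2.2.1 (θ p) (φ p) (χ p)

/-- Mutual coherence of a matrix: the supremum over pairs of distinct columns of the
normalized absolute inner product. -/
noncomputable def mutualCoherence {m : ℕ} {ι : Type*} (A : Matrix (Fin m) ι ℂ) : ℝ :=
  sSup {x : ℝ | ∃ i j : ι, i ≠ j ∧
    x = ‖∑ p, (starRingEnd ℂ) (A p i) * A p j‖ /
        (Real.sqrt (∑ p, Complex.normSq (A p i)) * Real.sqrt (∑ p, Complex.normSq (A p j)))}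

/-!
The column `(l, -k, -n)` of the Wigner-D matrix is a unimodular multiple of the column `(l, k, n)`:
`D_l^{-k,-n} = (-1)^(k-n) e^{i(2kφ + 2nχ)} D_l^{k,n}`, from the symmetry
`d_l^{-k,-n} = (-1)^(k-n) d_l^{k,n}` of the real d-functions. The congruence hypothesis makes the
phase `e^{i(2kφ_p + 2nχ_p)}` independent of the sample `p`, so for `l = B - 1` these two distinct
columns are parallel and their normalized inner product is `1`; Cauchy–Schwarz bounds all others by `1`.
-/

open ComplexConjugate

noncomputable def normalizedInner {ι : Type*} [Fintype ι] (a b : ι → ℂ) : ℝ :=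
  ‖∑ p, conj (a p) * b p‖ / (√(∑ p, Complex.normSq (a p)) * √(∑ p, Complex.normSq (b p)))

section NormalizedInner

variable {ι : Type*} [Fintype ι]

lemma normalizedInner_le_one (a b : ι → ℂ) : normalizedInner a b ≤ 1 := by
  refine div_le_one_of_le₀ ?_ (by positivity)
  calc ‖∑ p, conj (a p) * b p‖ ≤ ∑ p, ‖a p‖ * ‖b p‖ := by
        simpa using norm_sum_le Finset.univ fun p => conj (a p) * b p
    _ ≤ √(∑ p, ‖a p‖ ^ 2) * √(∑ p, ‖b p‖ ^ 2) := Real.sum_mul_le_sqrt_mul_sqrt _ _ _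
    _ = √(∑ p, Complex.normSq (a p)) * √(∑ p, Complex.normSq (b p)) := by
        simp only [Complex.sq_norm]

lemma normalizedInner_smul_right {a : ι → ℂ} (ha : a ≠ 0) {c : ℂ} (hc : c ≠ 0) :
    normalizedInner a (c • a) = 1 := by
  set S := ∑ p, Complex.normSq (a p)
  have hS : 0 < S := by
    obtain ⟨p, hp⟩ := Function.ne_iff.mp ha
    exact Finset.sum_pos' (fun _ _ => Complex.normSq_nonneg _)
      ⟨p, Finset.mem_univ p, Complex.normSq_pos.mpr hp⟩
  have hinner : ∑ p, conj (a p) * (c • a) p = c * S := by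
    simp only [Pi.smul_apply, smul_eq_mul, S, Complex.ofReal_sum, Finset.mul_sum,
      Complex.normSq_eq_conj_mul_self]
    exact Finset.sum_congr rfl fun p _ => by ring
  have hnormSq : ∑ p, Complex.normSq ((c • a) p) = ‖c‖ ^ 2 * S := by
    simp only [Pi.smul_apply, smul_eq_mul, Complex.normSq_mul, Finset.mul_sum, S,
      Complex.sq_norm]
  rw [normalizedInner, hinner, hnormSq, Real.sqrt_mul (by positivity), Real.sqrt_sq (norm_nonneg c),
    norm_mul, Complex.norm_real, Real.norm_of_nonneg hS.le]
  change ‖c‖ * S / (√S * (‖c‖ * √S)) = 1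
  rw [← mul_assoc, mul_comm √S, mul_assoc, Real.mul_self_sqrt hS.le]
  field_simp

end NormalizedInner

lemma mutualCoherence_eq_one_of_col_eq_smul {m : ℕ} {ι : Type*} (A : Matrix (Fin m) ι ℂ)
    {i j : ι} (hij : i ≠ j) (hi : (fun p => A p i) ≠ 0) {c : ℂ} (hc : c ≠ 0)
    (hj : (fun p => A p j) = c • fun p => A p i) : mutualCoherence A = 1 := by
  have hle : ∀ x ∈ {x : ℝ | ∃ i j : ι, i ≠ j ∧
      x = normalizedInner (fun p => A p i) (fun p => A p j)}, x ≤ 1 := by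
    rintro x ⟨i, j, -, rfl⟩
    exact normalizedInner_le_one _ _
  have hone : (1 : ℝ) ∈ {x : ℝ | ∃ i j : ι, i ≠ j ∧
      x = normalizedInner (fun p => A p i) (fun p => A p j)} :=
    ⟨i, j, hij, by rw [hj, normalizedInner_smul_right hi hc]⟩
  exact le_antisymm (csSup_le ⟨1, hone⟩ hle) (le_csSup ⟨1, hle⟩ hone)

lemma wignerd_neg_neg (l : ℕ) (k n : ℤ) (θ : ℝ) :
    wignerd l (-k) (-n) θ = (-1 : ℝ) ^ (k - n) * wignerd l k n θ := by
  have hξ : (-k - -n).natAbs = (k - n).natAbs := by omega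
  have hlam : (-k + -n).natAbs = (k + n).natAbs := by omega
  have hω : (if -k ≤ -n then 1 else (-1 : ℝ) ^ (-n - -k)) =
      (-1 : ℝ) ^ (k - n) * if k ≤ n then 1 else (-1 : ℝ) ^ (n - k) := by
    split_ifs with h₁ h₂ h₂
    · rw [show k - n = 0 by omega, zpow_zero, one_mul]
    · rw [← zpow_add₀ (by norm_num), show k - n + (n - k) = 0 by ring, zpow_zero]
    · rw [mul_one, neg_sub_neg]
    · omega
  simp only [wignerd, hξ, hlam, hω]
  ring

lemma wignerD_neg_neg (l : ℕ) (k n : ℤ) (θ φ χ : ℝ) :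
    wignerD l (-k) (-n) θ φ χ =
      (-1 : ℂ) ^ (k - n) * Complex.exp ((2 * n * χ + 2 * k * φ : ℝ) * Complex.I) *
        wignerD l k n θ φ χ := by
  set u := Complex.exp (Complex.I * k * φ)
  set v := Complex.exp (Complex.I * n * χ)
  have hexp : Complex.exp ((2 * n * χ + 2 * k * φ : ℝ) * Complex.I) = u ^ 2 * v ^ 2 := by
    rw [← Complex.exp_nat_mul, ← Complex.exp_nat_mul, ← Complex.exp_add]
    push_cast
    ring_nf
  have hu : Complex.exp (-(Complex.I * ↑(-k) * φ)) = u := by congr 1; push_cast; ring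
  have hv : Complex.exp (-(Complex.I * ↑(-n) * χ)) = v := by congr 1; push_cast; ring
  simp only [wignerD, wignerd_neg_neg, hexp, hu, hv, Complex.exp_neg]
  field_simp [Complex.exp_ne_zero]
  push_cast
  ring

theorem wdMatrix_full_coherence_general (B m : ℕ)
    (θ φ χ : Fin m → ℝ)
    (hcols : ∀ i : WDIndex B, ∃ p, wdMatrix B θ φ χ p i ≠ 0)
    (k n : ℤ) (hk : k.natAbs ≤ B - 1) (hn : n.natAbs ≤ B - 1) (hkn : (k, n) ≠ (0, 0))
    (hmod : ∀ i j : Fin m, ∃ t : ℤ,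
      (2 * (n : ℝ) * χ i + 2 * (k : ℝ) * φ i) - (2 * (n : ℝ) * χ j + 2 * (k : ℝ) * φ j) =
        t * (2 * Real.pi)) :
    mutualCoherence (wdMatrix B θ φ χ) = 1 := by
  have hne : k ≠ 0 ∨ n ≠ 0 := by contrapose! hkn; simp [hkn]
  let L : Fin B := ⟨B - 1, by omega⟩
  have hmem : ∀ z : ℤ, z.natAbs ≤ B - 1 → z ∈ Set.Icc (-(L : ℤ)) L := fun z hz => by
    simp only [Set.mem_Icc, L]; omega
  let i : WDIndex B := ⟨L, ⟨k, hmem k hk⟩, ⟨n, hmem n hn⟩⟩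
  let j : WDIndex B := ⟨L, ⟨-k, hmem (-k) (by omega)⟩, ⟨-n, hmem (-n) (by omega)⟩⟩
  have hij : i ≠ j := by
    intro h
    simp only [i, j, Sigma.mk.injEq, heq_eq_eq, Prod.mk.injEq, Subtype.mk.injEq, true_and] at h
    omega
  obtain ⟨p₀, hp₀⟩ := hcols i
  have hphase : ∀ p, Complex.exp ((2 * n * χ p + 2 * k * φ p : ℝ) * Complex.I) =
      Complex.exp ((2 * n * χ p₀ + 2 * k * φ p₀ : ℝ) * Complex.I) := fun p => by
    obtain ⟨t, ht⟩ := hmod p p₀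
    rw [Complex.exp_eq_exp_iff_exists_int]
    exact ⟨t, by rw [eq_add_of_sub_eq' ht]; push_cast; ring⟩
  refine mutualCoherence_eq_one_of_col_eq_smul _ hij (Function.ne_iff.mpr ⟨p₀, hp₀⟩)
    (c := (-1 : ℂ) ^ (k - n) * Complex.exp ((2 * n * χ p₀ + 2 * k * φ p₀ : ℝ) * Complex.I))
    (mul_ne_zero (zpow_ne_zero _ (by norm_num)) (Complex.exp_ne_zero _)) (funext fun p => ?_)
  simp only [wdMatrix, Pi.smul_apply, smul_eq_mul, i, j, wignerD_neg_neg, hphase p]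

/-- if the azimuth/polarization samples satisfy
`2nχ_i + 2kφ_i ≡ 2nχ_j + 2kφ_j (mod 2π)` for some orders `|k|,|n| ≤ B-1`, `(k,n) ≠ (0,0)`,
then the Wigner-D sensing matrix has mutual coherence `1`. -/
theorem wdMatrix_full_coherence (B m : ℕ) (hB : 2 ≤ B) (hm : 1 ≤ m)
    (θ φ χ : Fin m → ℝ)
    (hθ : ∀ p, θ p ∈ Set.Icc 0 Real.pi) (hφ : ∀ p, φ p ∈ Set.Ico 0 (2 * Real.pi))
    (hχ : ∀ p, χ p ∈ Set.Ico 0 (2 * Real.pi))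
    (hcols : ∀ i : WDIndex B, ∃ p, wdMatrix B θ φ χ p i ≠ 0)
    (k n : ℤ) (hk : k.natAbs ≤ B - 1) (hn : n.natAbs ≤ B - 1) (hkn : (k, n) ≠ (0, 0))
    (hmod : ∀ i j : Fin m, ∃ t : ℤ,
      (2 * (n : ℝ) * χ i + 2 * (k : ℝ) * φ i) - (2 * (n : ℝ) * χ j + 2 * (k : ℝ) * φ j) =
        t * (2 * Real.pi)) :
    mutualCoherence (wdMatrix B θ φ χ) = 1 :=
  wdMatrix_full_coherence_general B m θ φ χ hcols k n hk hn hkn hmod
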